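/- For every integer n ≥ 5, removing the hub vertex from the wheel W_n = K_1 ∨ C_{n−1} changes the strong domination number: γ_st(W_n) = 1 but γ_st(W_n − hub) = ⌈(n−1)/3⌉ ≥ 2; hence the stability of γ_st for W_n equals 1. -/

import Mathlib

open SimpleGraph

/-- `D` is a strong dominating set of `G`: every vertex outside `D` has a neighbor
in `D` whose degree is at least its own. -/
def IsStrongDominating {V : Type*} (G : SimpleGraph V) (D : Set V) : Prop :=
  ∀ v ∉ D, ∃ u ∈ D, G.Adj v u ∧ (G.neighborSet v).ncard ≤ (G.neighborSet u).ncard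

/-- The strong domination number. -/
noncomputable def gammaSt {V : Type*} (G : SimpleGraph V) : ℕ :=
  sInf {n | ∃ D : Set V, D.Finite ∧ IsStrongDominating G D ∧ D.ncard = n}

/-- The stability of the strong domination number: the minimum size of a vertex set
whose removal changes the strong domination number. -/
noncomputable def stGammaSt {V : Type*} (G : SimpleGraph V) : ℕ :=
  sInf {n | ∃ S : Set V, S.Finite ∧ S.ncard = n ∧ gammaSt (G.induce Sᶜ) ≠ gammaSt G}

/-- The join of two graphs. -/
def joinG {V W : Type*} (G : SimpleGraph V) (H : SimpleGraph W) : SimpleGraph (V ⊕ W) :=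
  SimpleGraph.fromRel (fun x y =>
    match x, y with
    | Sum.inl a, Sum.inl b => G.Adj a b
    | Sum.inr a, Sum.inr b => H.Adj a b
    | _, _ => True)

/-- `n` disjoint copies of `K₂`. -/
def nK2 (n : ℕ) : SimpleGraph (Fin n × Fin 2) where
  Adj x y := x.1 = y.1 ∧ x.2 ≠ y.2
  symm := ⟨fun x y h => ⟨h.1.symm, h.2.symm⟩⟩
  loopless := ⟨fun x h => h.2 rfl⟩

/-!
The hub of `W_n` is adjacent to every rim vertex and has the largest degree, so on its own it
strongly dominates `W_n`. Deleting it leaves the cycle `C_{n-1}`. The cycle is 2-regular, so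
there strong domination is plain domination: a vertex dominates at most three vertices, and
every third vertex suffices, giving `γ_st(C_{n-1}) = ⌈(n-1)/3⌉ ≥ 2`. Deleting no vertex leaves
`γ_st` unchanged, so the stability is `1`.
-/

theorem Nat.sInf_eq_one {s : Set ℕ} (h1 : 1 ∈ s) (h0 : 0 ∉ s) : sInf s = 1 :=
  le_antisymm (Nat.sInf_le h1) (Nat.one_le_iff_ne_zero.2 fun h => h0 (h ▸ Nat.sInf_mem ⟨1, h1⟩))

section General

variable {V W : Type*} {G : SimpleGraph V} {H : SimpleGraph W}

theorem SimpleGraph.Iso.ncard_neighborSet (e : G ≃g H) (v : V) :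
    (H.neighborSet (e v)).ncard = (G.neighborSet v).ncard :=
  Nat.card_congr (e.mapNeighborSet v).symm

theorem IsStrongDominating.image (e : G ≃g H) {D : Set V} (hD : IsStrongDominating G D) :
    IsStrongDominating H (e '' D) := by
  intro w hw
  obtain ⟨u, hu, hadj, hdeg⟩ := hD (e.symm w) fun h => hw ⟨_, h, e.apply_symm_apply w⟩
  refine ⟨e u, Set.mem_image_of_mem e hu, ?_, ?_⟩
  · simpa using e.map_adj_iff.mpr hadj
  · simpa [e.ncard_neighborSet] using (e.symm.ncard_neighborSet w).symm.trans_le hdeg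

theorem gammaSt_congr (e : G ≃g H) : gammaSt G = gammaSt H := by
  unfold gammaSt
  congr 1
  ext n
  constructor
  · rintro ⟨D, hD, hs, rfl⟩
    exact ⟨e '' D, hD.image e, hs.image e, Set.ncard_image_of_injective D e.injective⟩
  · rintro ⟨D, hD, hs, rfl⟩
    exact ⟨e.symm '' D, hD.image e.symm, hs.image e.symm,
      Set.ncard_image_of_injective D e.symm.injective⟩

theorem IsStrongDominating.nonempty [Nonempty V] {D : Set V} (hD : IsStrongDominating G D) :
    D.Nonempty := by
  obtain ⟨v⟩ := ‹Nonempty V›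
  by_cases hv : v ∈ D
  · exact ⟨v, hv⟩
  · obtain ⟨u, hu, -⟩ := hD v hv
    exact ⟨u, hu⟩

theorem gammaSt_eq_one_of_forall_adj [Finite V] (v : V) (hv : ∀ w ≠ v, G.Adj w v) :
    gammaSt G = 1 := by
  have hdeg (w : V) : (G.neighborSet w).ncard ≤ (G.neighborSet v).ncard := by
    have hv' : G.neighborSet v = {v}ᶜ := by
      ext w
      exact ⟨fun h => h.ne', fun h => (hv w h).symm⟩
    calc (G.neighborSet w).ncard ≤ ({w}ᶜ : Set V).ncard :=
          Set.ncard_le_ncard fun u hu => (G.ne_of_adj hu).symm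
      _ = (G.neighborSet v).ncard := by
        rw [hv', Set.ncard_compl, Set.ncard_compl, Set.ncard_singleton, Set.ncard_singleton]
  have hD : IsStrongDominating G {v} := fun w hw => ⟨v, rfl, hv w hw, hdeg w⟩
  have : Nonempty V := ⟨v⟩
  refine Nat.sInf_eq_one ⟨{v}, Set.toFinite _, hD, Set.ncard_singleton v⟩ ?_
  rintro ⟨D, hfin, hD, hcard⟩
  exact ((Set.ncard_pos hfin).mpr hD.nonempty).ne' hcard

theorem stGammaSt_eq_one_of_gammaSt_induce_ne (v : V)
    (hv : gammaSt (G.induce {v}ᶜ) ≠ gammaSt G) : stGammaSt G = 1 := by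
  refine Nat.sInf_eq_one ⟨{v}, Set.toFinite _, Set.ncard_singleton v, hv⟩ ?_
  rintro ⟨S, hS, hcard, hne⟩
  obtain rfl := (Set.ncard_eq_zero hS).mp hcard
  rw [Set.compl_empty] at hne
  exact hne (gammaSt_congr G.induceUnivIso)

theorem IsStrongDominating.card_le_mul_ncard [Finite V] {k : ℕ}
    (hk : ∀ v, (G.neighborSet v).ncard ≤ k) {D : Set V} (hD : IsStrongDominating G D) :
    Nat.card V ≤ (k + 1) * D.ncard := by
  have hfin := D.toFinite
  have hcover : (Set.univ : Set V) ⊆ ⋃ u ∈ hfin.toFinset, insert u (G.neighborSet u) := by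
    intro v _
    by_cases hv : v ∈ D
    · exact Set.mem_biUnion (hfin.mem_toFinset.mpr hv) (Set.mem_insert v _)
    · obtain ⟨u, hu, hadj, -⟩ := hD v hv
      exact Set.mem_biUnion (hfin.mem_toFinset.mpr hu) (Set.mem_insert_of_mem u hadj.symm)
  calc Nat.card V = (Set.univ : Set V).ncard := (Set.ncard_univ V).symm
    _ ≤ (⋃ u ∈ hfin.toFinset, insert u (G.neighborSet u)).ncard := Set.ncard_le_ncard hcover
    _ ≤ ∑ u ∈ hfin.toFinset, (insert u (G.neighborSet u)).ncard :=
        Finset.set_ncard_biUnion_le _ _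
    _ ≤ ∑ _u ∈ hfin.toFinset, (k + 1) :=
        Finset.sum_le_sum fun u _ =>
          (Set.ncard_insert_le u _).trans (Nat.add_le_add_right (hk u) 1)
    _ = (k + 1) * D.ncard := by
        rw [Finset.sum_const, smul_eq_mul, mul_comm, Set.ncard_eq_toFinset_card D hfin]

end General

section Cycle

theorem ncard_neighborSet_cycleGraph {n : ℕ} (hn : 3 ≤ n) (v : Fin n) :
    ((cycleGraph n).neighborSet v).ncard = 2 := by
  obtain ⟨m, rfl⟩ : ∃ m, n = m + 3 := ⟨n - 3, by omega⟩
  rw [← Nat.card_coe_set_eq, Nat.card_eq_fintype_card, card_neighborSet_eq_degree,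
    cycleGraph_degree_three_le]

theorem cycleGraph_adj_add_one {n : ℕ} (v : Fin (n + 2)) : (cycleGraph (n + 2)).Adj v (v + 1) :=
  cycleGraph_adj.mpr (Or.inr (add_sub_cancel_left v 1))

theorem isStrongDominating_cycleGraph {n : ℕ} (hn : 3 ≤ n) :
    IsStrongDominating (cycleGraph n) {v | 3 ∣ v.val} := by
  obtain ⟨m, rfl⟩ : ∃ m, n = m + 3 := ⟨n - 3, by omega⟩
  intro v hv
  have hv : v.val % 3 = 1 ∨ v.val % 3 = 2 := by simp only [Set.mem_ofPred_eq] at hv; omega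
  have hdeg (u : Fin (m + 3)) := (ncard_neighborSet_cycleGraph hn v).trans_le
    (ncard_neighborSet_cycleGraph hn u).ge
  rcases hv with hv | hv
  · have hval : (v - 1).val = v.val - 1 := by
      rw [Fin.coe_sub_one, if_neg (by rintro rfl; simp at hv)]
    refine ⟨v - 1, ?_, ?_, hdeg _⟩
    · simp only [Set.mem_ofPred_eq, hval]
      omega
    · have h := (cycleGraph_adj_add_one (n := m + 1) (v - 1)).symm
      rwa [sub_add_cancel] at h
  · refine ⟨v + 1, ?_, cycleGraph_adj_add_one v, hdeg _⟩
    simp only [Set.mem_ofPred_eq, Fin.val_add_one]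
    split_ifs <;> omega

theorem ncard_setOf_three_dvd_val (n : ℕ) : {v : Fin n | 3 ∣ v.val}.ncard = (n + 2) / 3 := by
  let f : Fin ((n + 2) / 3) → Fin n := fun i => ⟨3 * i, by omega⟩
  have hf : Function.Injective f := fun i j h => Fin.ext (by simpa [f] using h)
  have hrange : Set.range f = {v : Fin n | 3 ∣ v.val} := by
    ext v
    refine ⟨?_, fun ⟨c, hc⟩ => ⟨⟨c, by omega⟩, Fin.ext hc.symm⟩⟩
    rintro ⟨i, rfl⟩
    exact ⟨i, rfl⟩
  rw [← hrange, Set.ncard_range_of_injective hf, Nat.card_eq_fintype_card, Fintype.card_fin]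

theorem gammaSt_cycleGraph {n : ℕ} (hn : 3 ≤ n) : gammaSt (cycleGraph n) = (n + 2) / 3 := by
  refine le_antisymm ?_ (le_csInf ?_ ?_)
  · exact Nat.sInf_le ⟨_, Set.toFinite _, isStrongDominating_cycleGraph hn,
      ncard_setOf_three_dvd_val n⟩
  · exact ⟨_, _, Set.toFinite _, isStrongDominating_cycleGraph hn, ncard_setOf_three_dvd_val n⟩
  · rintro k ⟨D, -, hD, rfl⟩
    have := hD.card_le_mul_ncard fun v => (ncard_neighborSet_cycleGraph hn v).le
    rw [Nat.card_eq_fintype_card, Fintype.card_fin] at this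
    omega

end Cycle

section Join

variable {V W : Type*} {G : SimpleGraph V} {H : SimpleGraph W}

theorem joinG_adj_inl_inr (a : V) (b : W) : (joinG G H).Adj (Sum.inl a) (Sum.inr b) := by
  simp [joinG]

theorem joinG_adj_inr_inr {a b : W} : (joinG G H).Adj (Sum.inr a) (Sum.inr b) ↔ H.Adj a b := by
  simp only [joinG, fromRel_adj, ne_eq, Sum.inr.injEq]
  exact ⟨fun ⟨_, h⟩ => h.elim id H.adj_symm, fun h => ⟨h.ne, Or.inl h⟩⟩

variable (G H) in
def joinGInr : H ↪g joinG G H where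
  toFun := Sum.inr
  inj' := Sum.inr_injective
  map_rel_iff' := joinG_adj_inr_inr

theorem gammaSt_joinG_unit [Finite W] : gammaSt (joinG (⊥ : SimpleGraph Unit) H) = 1 :=
  gammaSt_eq_one_of_forall_adj (Sum.inl ()) fun
    | Sum.inl (), h => absurd rfl h
    | Sum.inr b, _ => (joinG_adj_inl_inr () b).symm

theorem gammaSt_joinG_unit_induce_compl_inl :
    gammaSt ((joinG (⊥ : SimpleGraph Unit) H).induce {Sum.inl ()}ᶜ) = gammaSt H := by
  rw [← Set.range_unique (f := Sum.inl), Set.compl_range_inl]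
  exact (gammaSt_congr (joinGInr _ H).isoInduceRange).symm

end Join

theorem stGammaSt_wheel_one (n : ℕ) (hn : 5 ≤ n) :
    gammaSt (joinG (⊥ : SimpleGraph Unit) (cycleGraph (n - 1))) = 1 ∧
    gammaSt ((joinG (⊥ : SimpleGraph Unit) (cycleGraph (n - 1))).induce {Sum.inl ()}ᶜ)
      = (n - 1 + 2) / 3 ∧
    2 ≤ (n - 1 + 2) / 3 ∧
    stGammaSt (joinG (⊥ : SimpleGraph Unit) (cycleGraph (n - 1))) = 1 := by
  have hwheel := gammaSt_joinG_unit (H := cycleGraph (n - 1))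
  have hrim : gammaSt ((joinG (⊥ : SimpleGraph Unit) (cycleGraph (n - 1))).induce {Sum.inl ()}ᶜ)
      = (n - 1 + 2) / 3 :=
    gammaSt_joinG_unit_induce_compl_inl.trans (gammaSt_cycleGraph (by omega))
  refine ⟨hwheel, hrim, by omega, stGammaSt_eq_one_of_gammaSt_induce_ne (Sum.inl ()) ?_⟩
  rw [hrim, hwheel]
  omega
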